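/- arXiv:1702.04912 — 9 statements merged into one kernel-verified Lean document; each statement's English description precedes it below -/
import Mathlib

section
/- For any category C and presheaf P on C, the slice category of presheaves over P is equivalent to the category of presheaves on the category of elements of P; moreover, for each presheaf Q over P, the category of elements of the corresponding presheaf on ∫P is isomorphic to the category of elements of Q. -/
open CategoryTheory

universe u

/-!
Under `overEquivPresheafCostructuredArrow`, `Q ⟶ P` becomes the presheaf on arrows
`s : yoneda X ⟶ P` sending `s` to the lifts of `s` through `Q`; transporting along
`(CostructuredArrow yoneda P)ᵒᵖ ≌ ∫P` gives a presheaf on `∫P` whose value at `(X, x)` is the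
fibre of `Q(X)` over `x`. An element of it is a triple `(X, x, u)` with `u` over `x`, which is
determined by the pair `(X, u)`: this identifies its category of elements with that of `Q`.
-/

namespace CategoryTheory

open CategoryOfElements Opposite

namespace Functor.Elements

variable {C D : Type*} [Category C] [Category D] (F : C ⥤ D) (G : D ⥤ Type*)

instance [F.Faithful] : (precomp F G).Faithful where
  map_injective h := Subtype.ext (F.map_injective (congrArg Subtype.val h))

instance [F.Full] : (precomp F G).Full where
  map_surjective {x y} f := by
    obtain ⟨g, hg⟩ := f
    change F.obj x.1 ⟶ F.obj y.1 at g
    change G.map g x.2 = y.2 at hg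
    exact ⟨homMk x y (F.preimage g) (by simpa using hg), Subtype.ext (F.map_preimage g)⟩

instance [F.EssSurj] : (precomp F G).EssSurj where
  mem_essImage y :=
    ⟨(F ⋙ G).elementsMk (F.objPreimage y.1) (G.map (F.objObjPreimageIso y.1).inv y.2),
      ⟨CategoryOfElements.isoMk _ _ (F.objObjPreimageIso y.1)
        (G.map_inv_hom'_apply (F.objObjPreimageIso y.1) y.2)⟩⟩

instance [F.IsEquivalence] : (precomp F G).IsEquivalence where

end Functor.Elements

namespace OverPresheafAux

variable {C : Type u} [SmallCategory C] {A F : Cᵒᵖ ⥤ Type u} (η : F ⟶ A)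

def restrictedYonedaObjElementsFunctor : (restrictedYonedaObj η).Elements ⥤ F.Elements where
  obj x := ⟨op x.1.unop.left, x.2.val⟩
  map f := ⟨f.1.unop.left.op, congrArg Subtype.val f.2⟩

instance : (restrictedYonedaObjElementsFunctor η).Faithful where
  map_injective h := Subtype.ext (Quiver.Hom.unop_inj
    (CostructuredArrow.hom_ext _ _ (Quiver.Hom.op_inj (congrArg Subtype.val h))))

instance : (restrictedYonedaObjElementsFunctor η).Full where
  map_surjective {x y} f := by
    obtain ⟨g, hg⟩ := f
    change op x.1.unop.left ⟶ op y.1.unop.left at g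
    change F.map g x.2.val = y.2.val at hg
    have w : yoneda.map g.unop ≫ x.1.unop.hom = y.1.unop.hom := by
      apply yonedaEquiv.injective
      rw [← yonedaEquiv_naturality', ← x.2.app_val, ← y.2.app_val, ← hg]
      exact (η.naturality_apply g _).symm
    exact ⟨homMk _ _ (CostructuredArrow.homMk g.unop w).op (OverArrows.ext hg), rfl⟩

instance : (restrictedYonedaObjElementsFunctor η).EssSurj where
  mem_essImage := by
    rintro ⟨X, u⟩
    exact ⟨⟨op (CostructuredArrow.mk (yonedaEquiv.symm (η.app X u))), ⟨u, ⟨by simp⟩⟩⟩,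
      ⟨Iso.refl _⟩⟩

instance : (restrictedYonedaObjElementsFunctor η).IsEquivalence where

end OverPresheafAux

open OverPresheafAux

variable {C : Type u} [SmallCategory C]

def costructuredArrowYonedaOpEquivalence (P : Cᵒᵖ ⥤ Type u) :
    (CostructuredArrow yoneda P)ᵒᵖ ≌ P.Elements :=
  (costructuredArrowYonedaEquivalence P).symm.op.trans (opOpEquivalence P.Elements)

def overEquivPresheafElements (P : Cᵒᵖ ⥤ Type u) : Over P ≌ (P.Elements ⥤ Type u) :=
  (overEquivPresheafCostructuredArrow P).trans
    (costructuredArrowYonedaOpEquivalence P).congrLeft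

noncomputable def overEquivPresheafElementsObjElementsEquivalence {P : Cᵒᵖ ⥤ Type u}
    (Q : Over P) : ((overEquivPresheafElements P).functor.obj Q).Elements ≌ Q.left.Elements :=
  (Functor.Elements.precomp (costructuredArrowYonedaOpEquivalence P).inverse
      (restrictedYonedaObj Q.hom)).asEquivalence.trans
    (restrictedYonedaObjElementsFunctor Q.hom).asEquivalence

end CategoryTheory

/-- For any category `C` and presheaf `P` on `C`, the slice category of presheaves over
`P` is equivalent to the category of presheaves on the category of elements of `P`
(equivalently, covariant functors on `P.Elements`); moreover for each presheaf `Q` over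
`P`, the category of elements of the corresponding presheaf on `∫P` is isomorphic to the
category of elements of `Q`. -/
theorem over_presheaf_equiv_presheaves_on_elements
    {C : Type u} [SmallCategory C] (P : Cᵒᵖ ⥤ Type u) :
    Nonempty ((e : Over P ≌ (P.Elements ⥤ Type u)) ×'
      ∀ Q : Over P, Nonempty ((e.functor.obj Q).Elements ≌ Q.left.Elements)) :=
  ⟨⟨overEquivPresheafElements P, fun Q => ⟨overEquivPresheafElementsObjElementsEquivalence Q⟩⟩⟩
end

section
/- A category with families C is contextual (every context is fibrant) if and only if the canonical functor from the category of types over the unit context to C is an equivalence of categories. -/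
open CategoryTheory Opposite

universe v u w

/-- A category with families: a category with a distinguished terminal object,
a presheaf of types, terms over each type, and context extensions representing
the functor `(Δ, σ) ↦ Tm_Δ(A[σ])`. -/
structure CwF where
  C : Type u
  [cat : Category.{v} C]
  unit : C
  isTerminal : Limits.IsTerminal unit
  Ty : Cᵒᵖ ⥤ Type w
  Tm : ∀ {Γ : C}, Ty.obj (op Γ) → Type w
  sub : ∀ {Δ Γ : C} (σ : Δ ⟶ Γ) {A : Ty.obj (op Γ)}, Tm A → Tm (Ty.map σ.op A)
  ext : ∀ {Γ : C}, Ty.obj (op Γ) → C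
  disp : ∀ {Γ : C} (A : Ty.obj (op Γ)), ext A ⟶ Γ
  /-- `Γ.A` represents the functor `(Δ, σ) ↦ Tm_Δ(A[σ])` on the slice over `Γ`. -/
  extend : ∀ {Δ Γ : C} (σ : Δ ⟶ Γ) (A : Ty.obj (op Γ)),
      Tm (Ty.map σ.op A) ≃ { τ : Δ ⟶ ext A // τ ≫ disp A = σ }
  extend_natural : ∀ {Δ' Δ Γ : C} (ρ : Δ' ⟶ Δ) (σ : Δ ⟶ Γ) (A : Ty.obj (op Γ))
      (a : Tm (Ty.map σ.op A)),
      (extend (ρ ≫ σ) A (cast (congrArg (fun X : Ty.obj (op Δ') => Tm X)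
          (by simp : Ty.map ρ.op (Ty.map σ.op A) = Ty.map (ρ ≫ σ).op A)) (sub ρ a))).1
        = ρ ≫ (extend σ A a).1

attribute [instance] CwF.cat

/-- A morphism is a fibration if it is isomorphic over its codomain to a display map. -/
def CwF.Fibration (M : CwF.{v, u, w}) {Δ Γ : M.C} (p : Δ ⟶ Γ) : Prop :=
  ∃ (A : M.Ty.obj (op Γ)) (e : Δ ≅ M.ext A), e.hom ≫ M.disp A = p

/-- A CwF is contextual if every context is fibrant, i.e. the unique map to the
terminal object is a fibration. -/
def CwF.Contextual (M : CwF.{v, u, w}) : Prop :=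
  ∀ Γ : M.C, M.Fibration (M.isTerminal.from Γ)

/-- The category of types over the unit context: morphisms are morphisms over the unit
context between the corresponding display maps. -/
def CwF.TyUnit (M : CwF.{v, u, w}) : Type w := M.Ty.obj (op M.unit)

instance (M : CwF.{v, u, w}) : Category M.TyUnit where
  Hom A B := { f : M.ext A ⟶ M.ext B // f ≫ M.disp B = M.disp A }
  id A := ⟨𝟙 _, by simp⟩
  comp f g := ⟨f.1 ≫ g.1, by rw [Category.assoc, g.2, f.2]⟩
  id_comp f := Subtype.ext (by simp)
  comp_id f := Subtype.ext (by simp)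
  assoc f g h := Subtype.ext (by simp)

/-- The canonical functor from the category of types over the unit context,
sending a type `A` to the context extension `1.A`. -/
def CwF.j (M : CwF.{v, u, w}) : M.TyUnit ⥤ M.C where
  obj A := M.ext A
  map f := f.1
  map_id _ := rfl
  map_comp _ _ := rfl

/-- A CwF is contextual if and only if the canonical functor from the category of
types over the unit context is an equivalence of categories. -/
theorem cwf_contextual_iff_equivalence (M : CwF.{v, u, w}) :
    M.Contextual ↔ M.j.IsEquivalence := by
  have faithful : M.j.Faithful := ⟨fun h => Subtype.ext h⟩
  have full : M.j.Full := ⟨fun {A B} g => ⟨⟨g, M.isTerminal.hom_ext _ _⟩, rfl⟩⟩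
  constructor
  · intro h
    have ess : M.j.EssSurj := ⟨fun Γ => by
      obtain ⟨A, e, _⟩ := h Γ
      exact ⟨A, ⟨e.symm⟩⟩⟩
    exact { }
  · intro h
    intro Γ
    obtain ⟨A, ⟨e⟩⟩ := h.essSurj.mem_essImage Γ
    exact ⟨A, e.symm, M.isTerminal.hom_ext _ _⟩
end

section
/- Every contextual category with families has finite products. -/
open CategoryTheory Opposite

universe v u w

/-!
Maps `Θ ⟶ Δ.A[σ]` over `f : Θ ⟶ Δ` are terms of `A[σ][f] = A[f ≫ σ]`, i.e. maps
`Θ ⟶ Γ.A` over `f ≫ σ`, naturally in `Θ`; so `Δ.A[σ]` is the pullback of `Γ.A ⟶ Γ` along `σ`.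
Over the terminal context this pullback is the product `Δ × 1.A`, and in a contextual CwF every
context is isomorphic to some `1.A`.
-/

open Limits

namespace CwF

variable {M : CwF.{v, u, w}}

theorem extend_congr {Δ Γ : M.C} {σ₁ σ₂ : Δ ⟶ Γ} (hσ : σ₁ = σ₂) (A : M.Ty.obj (op Γ))
    {a₁ : M.Tm (M.Ty.map σ₁.op A)} {a₂ : M.Tm (M.Ty.map σ₂.op A)} (ha : a₁ ≍ a₂) :
    (M.extend σ₁ A a₁).1 = (M.extend σ₂ A a₂).1 := by
  subst hσ
  rw [eq_of_heq ha]

theorem sub_congr_heq {Δ Γ : M.C} (ρ : Δ ⟶ Γ) {A₁ A₂ : M.Ty.obj (op Γ)} (hA : A₁ = A₂)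
    {a₁ : M.Tm A₁} {a₂ : M.Tm A₂} (ha : a₁ ≍ a₂) : M.sub ρ a₁ ≍ M.sub ρ a₂ := by
  subst hA
  rw [eq_of_heq ha]

theorem ty_map_map {Θ Δ Γ : M.C} (f : Θ ⟶ Δ) (σ : Δ ⟶ Γ) (A : M.Ty.obj (op Γ)) :
    M.Ty.map f.op (M.Ty.map σ.op A) = M.Ty.map (f ≫ σ).op A := by
  simp

def substExtEquiv {Θ Δ Γ : M.C} (f : Θ ⟶ Δ) (σ : Δ ⟶ Γ) (A : M.Ty.obj (op Γ)) :
    { τ : Θ ⟶ M.ext (M.Ty.map σ.op A) // τ ≫ M.disp _ = f } ≃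
      { τ : Θ ⟶ M.ext A // τ ≫ M.disp A = f ≫ σ } :=
  (M.extend f _).symm.trans
    ((Equiv.cast (congrArg (fun X => M.Tm X) (ty_map_map f σ A))).trans (M.extend (f ≫ σ) A))

theorem substExtEquiv_comp {Θ' Θ Δ Γ : M.C} (ρ : Θ' ⟶ Θ) (f : Θ ⟶ Δ) (σ : Δ ⟶ Γ)
    (A : M.Ty.obj (op Γ)) (τ : { τ : Θ ⟶ M.ext (M.Ty.map σ.op A) // τ ≫ M.disp _ = f }) :
    (M.substExtEquiv (ρ ≫ f) σ A ⟨ρ ≫ τ.1, by rw [Category.assoc, τ.2]⟩).1 =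
      ρ ≫ (M.substExtEquiv f σ A τ).1 := by
  set a := (M.extend f _).symm τ
  have hρτ : M.extend (ρ ≫ f) _ (cast (congrArg (fun X => M.Tm X) (ty_map_map ρ f _))
      (M.sub ρ a)) = ⟨ρ ≫ τ.1, by rw [Category.assoc, τ.2]⟩ :=
    Subtype.ext ((M.extend_natural ρ f _ a).trans (by simp [a]))
  simp only [substExtEquiv, Equiv.trans_apply, Equiv.cast_apply]
  rw [← M.extend_natural, ← hρτ, Equiv.symm_apply_apply]
  refine extend_congr (Category.assoc _ _ _) A ?_
  refine (cast_heq _ _).trans ((cast_heq _ _).trans ?_)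
  exact (sub_congr_heq ρ (ty_map_map f σ A) (cast_heq _ a).symm).trans (cast_heq _ _).symm

def extMap {Δ Γ : M.C} (σ : Δ ⟶ Γ) (A : M.Ty.obj (op Γ)) : M.ext (M.Ty.map σ.op A) ⟶ M.ext A :=
  (M.substExtEquiv (M.disp _) σ A ⟨𝟙 _, Category.id_comp _⟩).1

theorem extMap_disp {Δ Γ : M.C} (σ : Δ ⟶ Γ) (A : M.Ty.obj (op Γ)) :
    M.extMap σ A ≫ M.disp A = M.disp _ ≫ σ :=
  (M.substExtEquiv (M.disp _) σ A ⟨𝟙 _, Category.id_comp _⟩).2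

theorem substExtEquiv_apply {Θ Δ Γ : M.C} (f : Θ ⟶ Δ) (σ : Δ ⟶ Γ) (A : M.Ty.obj (op Γ))
    (τ : { τ : Θ ⟶ M.ext (M.Ty.map σ.op A) // τ ≫ M.disp _ = f }) :
    (M.substExtEquiv f σ A τ).1 = τ.1 ≫ M.extMap σ A := by
  obtain ⟨τ, rfl⟩ := τ
  simpa [extMap] using M.substExtEquiv_comp τ (M.disp _) σ A ⟨𝟙 _, Category.id_comp _⟩

theorem isPullback_extMap {Δ Γ : M.C} (σ : Δ ⟶ Γ) (A : M.Ty.obj (op Γ)) :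
    IsPullback (M.extMap σ A) (M.disp _) (M.disp A) σ := by
  refine IsPullback.mk' (M.extMap_disp σ A) (fun T φ φ' hq hp => ?_) (fun T a b hab => ?_)
  · have hφ := (M.substExtEquiv (φ ≫ M.disp _) σ A).injective (a₁ := ⟨φ, rfl⟩)
      (a₂ := ⟨φ', hp.symm⟩) (Subtype.ext (by simpa only [substExtEquiv_apply] using hq))
    exact congrArg Subtype.val hφ
  · refine ⟨((M.substExtEquiv b σ A).symm ⟨a, hab⟩).1, ?_, ((M.substExtEquiv b σ A).symm _).2⟩
    rw [← substExtEquiv_apply, Equiv.apply_symm_apply]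

theorem hasBinaryProduct_ext (Γ : M.C) (A : M.Ty.obj (op M.unit)) :
    HasBinaryProduct Γ (M.ext A) :=
  HasLimit.mk ⟨_, isProductOfIsTerminalIsPullback _ _ _ _ M.isTerminal
    (M.isPullback_extMap (M.isTerminal.from Γ) A).flip.isLimit⟩

end CwF

/-- Every contextual category with families has finite products. -/
theorem cwf_contextual_hasFiniteProducts (M : CwF.{v, u, w}) (h : M.Contextual) :
    Limits.HasFiniteProducts M.C := by
  have : HasTerminal M.C := M.isTerminal.hasTerminal
  have : ∀ {Γ Δ : M.C}, HasBinaryProduct Γ Δ := fun {Γ Δ} => by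
    obtain ⟨A, e, -⟩ := h Δ
    have := M.hasBinaryProduct_ext Γ A
    exact hasLimit_of_iso (mapPairIso (F := pair Γ (M.ext A)) (Iso.refl Γ) e.symm)
  have := hasBinaryProducts_of_hasLimit_pair M.C
  exact hasFiniteProducts_of_has_binary_and_terminal
end

section
/- In a two-level type theory, if the coercion from fibrant types to strict types is an isomorphism (every strict type is fibrant), then strict equality and fibrant equality coincide up to strict isomorphism; in particular fibrant equality satisfies uniqueness of identity proofs. -/
universe u

/-- A two-level type theory, presented over the strict layer of Lean types (where
strict equality is `Eq`, which satisfies UIP and function extensionality): a class of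
fibrant types closed under unit, Σ and Π, together with a fibrant (intensional)
equality type on fibrant types, with path induction `J` into fibrant families and its
computation rule. -/
structure TLTT where
  /-- Fibrancy predicate: the fibrant types among the strict types. -/
  Fib : Type u → Prop
  fib_unit : Fib PUnit
  fib_sigma : ∀ {A : Type u} {B : A → Type u},
      Fib A → (∀ a, Fib (B a)) → Fib (Σ a, B a)
  fib_pi : ∀ {A : Type u} {B : A → Type u},
      Fib A → (∀ a, Fib (B a)) → Fib (∀ a, B a)
  /-- The fibrant (intensional) equality type. -/
  Id : ∀ {A : Type u}, A → A → Type u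
  idrefl : ∀ {A : Type u} (a : A), Id a a
  fib_id : ∀ {A : Type u}, Fib A → ∀ a b : A, Fib (Id a b)
  /-- Path induction, eliminating into fibrant families. -/
  J : ∀ {A : Type u} (a : A) (P : ∀ b : A, Id a b → Type u),
      (∀ b p, Fib (P b p)) → P a (idrefl a) → ∀ (b : A) (p : Id a b), P b p
  J_refl : ∀ {A : Type u} (a : A) (P : ∀ b : A, Id a b → Type u)
      (hP : ∀ b p, Fib (P b p)) (d : P a (idrefl a)), J a P hP d a (idrefl a) = d

/-- A map is an equivalence (of fibrant types) if it has a right inverse and a left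
inverse up to fibrant equality. -/
def IsEquivT (T : TLTT.{u}) {A B : Type u} (f : A → B) : Type u :=
  ((g : B → A) ×' ∀ b, T.Id (f (g b)) b) × ((h : B → A) ×' ∀ a, T.Id (h (f a)) a)

/-- A map `p : E → B` is a fibration if its strict fibres are strictly isomorphic to the
values of a fibrant type family over `B`. -/
def IsFibrationT (T : TLTT.{u}) {E B : Type u} (p : E → B) : Prop :=
  ∃ F : B → Type u, (∀ b, T.Fib (F b)) ∧ ∀ b, Nonempty (F b ≃ { e : E // p e = b })

/-- If the coercion from fibrant to strict types is an isomorphism — i.e. every strict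
type is fibrant — then strict and fibrant equality coincide up to strict isomorphism;
in particular fibrant equality satisfies uniqueness of identity proofs. -/
theorem all_fibrant_collapse (T : TLTT.{u}) (h : ∀ A : Type u, T.Fib A)
    (A : Type u) (a b : A) :
    Nonempty (T.Id a b ≃ (a = b)) ∧ ∀ p q : T.Id a b, Nonempty (T.Id p q) := by
  let toId : ∀ {B : Type u} {x y : B}, x = y → T.Id x y :=
    fun {B x y} e => e ▸ T.idrefl x
  let f : ∀ {x y : A}, T.Id x y → x = y := fun {x y} p =>
    (T.J x (fun z _ => ULift.{u} (PLift (x = z))) (fun _ _ => h _) ⟨⟨rfl⟩⟩ y p).down.down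
  have hf : (f (T.idrefl a) : a = a) = rfl := by
    show (T.J a (fun z _ => ULift.{u} (PLift (a = z))) (fun _ _ => h _) ⟨⟨rfl⟩⟩
        a (T.idrefl a)).down.down = rfl
    rw [T.J_refl]
  have lft : ∀ p : T.Id a b, toId (f p) = p := by
    intro p
    refine (T.J a (fun z q => ULift.{u} (PLift (toId (f q) = q))) (fun _ _ => h _) ?_ b p).down.down
    exact ULift.up (PLift.up (by rw [hf]))
  refine ⟨⟨⟨f, toId, lft, fun e => Subsingleton.elim _ _⟩⟩, fun p q => ?_⟩
  have hpq : p = q := by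
    rw [← lft p, ← lft q, Subsingleton.elim (f p) (f q)]
  exact ⟨toId hpq⟩
end

section
/- In a two-level type theory, assume a fibrant replacement operator R assigning to every strict type A a fibrant type R(A) with a map η : A → R(A), an eliminator elim : (X fibrant) → (A → X) → R(A) → X, and a computation rule elim(f)(η(a)) = f(a) up to fibrant equality. Then every fibrant type A is a set: for all x, y : A and p, q : x = y one has p = q. -/
universe u

/-- A fibrant replacement operator: for every strict type `A`, a fibrant type `R A`
with a unit `η`, an eliminator into fibrant types and a computation rule up to fibrant
equality. -/
structure FibRepl (T : TLTT.{u}) where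
  R : Type u → Type u
  fib_R : ∀ A : Type u, T.Fib (R A)
  eta : ∀ {A : Type u}, A → R A
  elim : ∀ {A : Type u} (X : Type u), T.Fib X → (A → X) → R A → X
  elim_comp : ∀ {A : Type u} (X : Type u) (hX : T.Fib X) (f : A → X) (a : A),
      T.Id (elim X hX f (eta a)) (f a)

/-- If there is a fibrant replacement operator, then every fibrant type is a set:
any two parallel fibrant equality proofs are fibrantly equal. -/
theorem fibrant_replacement_collapses (T : TLTT.{u}) (FR : FibRepl T)
    (A : Type u) (hA : T.Fib A) (x y : A) (p q : T.Id x y) :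
    Nonempty (T.Id p q) := by
  -- strict equality to fibrant equality
  let toId : ∀ {b : A}, x = b → T.Id x b := fun {b} h => h ▸ T.idrefl x
  -- symmetry and transitivity of fibrant equality on the fibrant type A
  have symmId : ∀ {B : Type u}, T.Fib B → ∀ {a b : B}, T.Id a b → T.Id b a :=
    fun {B} hB {a b} r =>
    T.J a (fun c _ => T.Id c a) (fun c _ => T.fib_id hB c a) (T.idrefl a) b r
  have transId : ∀ {B : Type u}, T.Fib B → ∀ {a b c : B}, T.Id a b → T.Id b c → T.Id a c :=
    fun {B} hB {a b c} r s =>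
    T.J b (fun d _ => T.Id a d) (fun d _ => T.fib_id hB a d) r c s
  -- For every p : Id x b, a point of the fibrant replacement of the strict type
  -- `∀ r : x =ˢ b, toId r = p`
  let D : ∀ (b : A), T.Id x b → Type u :=
    fun b p' => ∀ r : x = b, T.Id (toId r) p'
  have d0 : D x (T.idrefl x) := fun _ => T.idrefl (T.idrefl x)
  let κ : ∀ (b : A) (p' : T.Id x b), FR.R (D b p') :=
    T.J x (fun b p' => FR.R (D b p')) (fun _ _ => FR.fib_R _) (FR.eta d0)
  -- evaluate: from a strict equality r : x = y, a fibrant path toId r = p'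
  have ev : ∀ (r : x = y) (p' : T.Id x y), T.Id (toId r) p' := fun r p' =>
    FR.elim (T.Id (toId r) p') (T.fib_id (T.fib_id hA x y) _ _)
      (fun d => d r) (κ y p')
  -- a point of R (PLift (x = y)) obtained from p
  let Φ : FR.R (ULift.{u} (PLift (x = y))) :=
    T.J x (fun b _ => FR.R (ULift.{u} (PLift (x = b)))) (fun _ _ => FR.fib_R _)
      (FR.eta ⟨⟨rfl⟩⟩) y p
  exact ⟨FR.elim (T.Id p q) (T.fib_id (T.fib_id hA x y) p q)
      (fun r => transId (T.fib_id hA x y) (symmId (T.fib_id hA x y) (ev r.down.down p)) (ev r.down.down q)) Φ⟩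
end

section
/- Let I be a type strictly isomorphic to a strict finite ordinal Finˢ(n) for some strict natural number n, and let X : I → U be a family of fibrant types. Then the dependent product (i : I) → X(i) is essentially fibrant, i.e. strictly isomorphic to a fibrant type. -/
universe u

/-- Strict finite ordinals: `Finˢ 0 := 0ˢ`, `Finˢ (n+1) := 1 +ˢ Finˢ n`. -/
def SFin : ℕ → Type u
  | 0 => PEmpty
  | n + 1 => PUnit ⊕ SFin n


theorem sfin_pi_aux (T : TLTT.{u}) :
    ∀ n (Y : SFin.{u} n → Type u), (∀ j, T.Fib (Y j)) →
      ∃ B : Type u, T.Fib B ∧ Nonempty ((∀ j, Y j) ≃ B) := by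
  intro n
  induction n with
  | zero =>
    intro Y _
    exact ⟨PUnit, T.fib_unit, ⟨⟨fun _ => PUnit.unit, fun _ j => (j : PEmpty).elim, fun f => funext fun j => (j : PEmpty).elim, fun _ => rfl⟩⟩⟩
  | succ n ih =>
    intro Y hY
    obtain ⟨B, hB, ⟨eB⟩⟩ := ih (fun b => Y (Sum.inr b)) (fun b => hY _)
    refine ⟨Σ _ : Y (Sum.inl PUnit.unit), B,
      T.fib_sigma (hY _) (fun _ => hB), ⟨?_⟩⟩
    exact ((Equiv.sumPiEquivProdPi Y).trans
      (Equiv.prodCongr (Equiv.piUnique _) eB)).trans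
      (Equiv.sigmaEquivProd _ _).symm

/-- If `I` is strictly isomorphic to a strict finite ordinal and `X : I → U` is a family
of fibrant types, then the dependent product `(i : I) → X i` is essentially fibrant,
i.e. strictly isomorphic to a fibrant type. -/
theorem finite_pi_essentially_fibrant (T : TLTT.{u}) (n : ℕ) (I : Type u)
    (e : I ≃ SFin.{u} n) (X : I → Type u) (hX : ∀ i, T.Fib (X i)) :
    ∃ B : Type u, T.Fib B ∧ Nonempty ((∀ i, X i) ≃ B) := by
  obtain ⟨B, hB, ⟨eB⟩⟩ := sfin_pi_aux T n (fun j => X (e.symm j))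
    (fun j => hX _)
  exact ⟨B, hB, ⟨(Equiv.piCongrLeft' X e).trans eB⟩⟩
end

section
/- Let C be a finite inverse strict category (with an explicit rank functor to (ℕˢ)^op creating identities and a finite type of objects). Then every Reedy fibrant diagram X : C → U has a fibrant limit: its strict limit is strictly isomorphic to a fibrant type. -/
universe u

/-- A strict category: objects, hom-types, identities and composition, with the
categorical laws holding up to strict equality. -/
structure SCat where
  Obj : Type u
  Hom : Obj → Obj → Type u
  id : ∀ x, Hom x x
  comp : ∀ {x y z : Obj}, Hom y z → Hom x y → Hom x z
  id_comp : ∀ {x y : Obj} (f : Hom x y), comp (id y) f = f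
  comp_id : ∀ {x y : Obj} (f : Hom x y), comp f (id x) = f
  assoc : ∀ {x y z w : Obj} (h : Hom z w) (g : Hom y z) (f : Hom x y),
      comp h (comp g f) = comp (comp h g) f

/-- A strict functor from a strict category to the universe of strict types,
strictly preserving identities and composition. -/
structure SFunctor (C : SCat.{u}) where
  obj : C.Obj → Type u
  map : ∀ {x y : C.Obj}, C.Hom x y → obj x → obj y
  map_id : ∀ (x : C.Obj) (a : obj x), map (C.id x) a = a
  map_comp : ∀ {x y z : C.Obj} (g : C.Hom y z) (f : C.Hom x y) (a : obj x),
      map (C.comp g f) a = map g (map f a)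

/-- The strict limit of a diagram of strict types: the type of natural transformations
from the constant functor at the unit type, i.e. compatible families of elements. -/
def SLimit {C : SCat.{u}} (X : SFunctor C) : Type u :=
  { c : ∀ y : C.Obj, X.obj y // ∀ (x y : C.Obj) (f : C.Hom x y), X.map f (c x) = c y }

/-- An object of the reduced coslice `z ⫽ C`: an object with a non-identity map from `z`. -/
structure RCObj (C : SCat.{u}) (z : C.Obj) where
  y : C.Obj
  f : C.Hom z y
  nonid : ∀ _ : z = y, ¬ HEq f (C.id z)

/-- The matching object of a diagram `X` at `z`: the strict limit of `X` restricted
along the forgetful functor from the reduced coslice `z ⫽ C`. -/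
def Matching {C : SCat.{u}} (X : SFunctor C) (z : C.Obj) : Type u :=
  { c : ∀ o : RCObj C z, X.obj o.y //
    ∀ (o o' : RCObj C z) (h : C.Hom o.y o'.y), C.comp h o.f = o'.f →
      X.map h (c o) = c o' }

/-- The canonical map from `X z` to the matching object at `z`. -/
def matchMap {C : SCat.{u}} (X : SFunctor C) (z : C.Obj) :
    X.obj z → Matching X z :=
  fun a => ⟨fun o => X.map o.f a, by
    intro o o' h hh
    rw [← X.map_comp, hh]⟩

/-- A diagram over an inverse category is Reedy fibrant if each canonical map to the
matching object is a fibration. -/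
def ReedyFibrant (T : TLTT.{u}) {C : SCat.{u}} (X : SFunctor C) : Prop :=
  ∀ z : C.Obj, IsFibrationT T (matchMap X z)

/-- An inverse structure on a strict category: a rank functor to `(ℕˢ)ᵒᵖ` which
creates identities. -/
structure IsInverse (C : SCat.{u}) where
  rank : C.Obj → ℕ
  rank_le : ∀ {x y : C.Obj}, C.Hom x y → rank y ≤ rank x
  createsId : ∀ {x y : C.Obj} (f : C.Hom x y), rank x = rank y →
      ∃ _ : x = y, HEq f (C.id x)

/-!
A source `z` of the category (an object of maximal rank, so that no non-identity map enters it)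
can be removed: a cone over `X` is a cone over the full subcategory on the other objects together
with a point of the fibre of the matching map `X z → M_z` over the induced point of `M_z`.
Reedy fibrancy restricts to that subcategory, which has one object fewer, so by induction its
limit is essentially fibrant; the fibres of the fibration `X z → M_z` are essentially fibrant,
and a Σ-type of essentially fibrant types over an essentially fibrant base is essentially fibrant.
-/

def EssFib (T : TLTT.{u}) (A : Type u) : Prop :=
  ∃ B : Type u, T.Fib B ∧ Nonempty (A ≃ B)

theorem Equiv.essFib {T : TLTT.{u}} {A A' : Type u} (e : A ≃ A') (h : EssFib T A') :
    EssFib T A :=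
  let ⟨B, hB, ⟨e'⟩⟩ := h
  ⟨B, hB, ⟨e.trans e'⟩⟩

namespace EssFib

variable {T : TLTT.{u}} {A : Type u}

theorem of_unique [Unique A] : EssFib T A :=
  ⟨PUnit, T.fib_unit, ⟨Equiv.ofUnique A PUnit⟩⟩

theorem sigma {P : A → Type u} (hA : EssFib T A) (hP : ∀ a, EssFib T (P a)) :
    EssFib T (Σ a, P a) := by
  obtain ⟨B, hB, ⟨e⟩⟩ := hA
  choose Q hQ eQ using hP
  refine ⟨Σ b, Q (e.symm b), T.fib_sigma hB fun b => hQ _, ⟨?_⟩⟩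
  exact (Equiv.sigmaCongrRight fun a => (eQ a).some).trans
    (Equiv.sigmaCongrLeft (β := fun a => Q a) e.symm).symm

end EssFib

section Fibration

variable {T : TLTT.{u}} {E B B' : Type u} {p : E → B}

theorem IsFibrationT.essFib_fiber (hp : IsFibrationT T p) (b : B) :
    EssFib T {e // p e = b} :=
  let ⟨F, hF, eF⟩ := hp
  ⟨F b, hF b, ⟨(eF b).some.symm⟩⟩

theorem IsFibrationT.equiv_comp (hp : IsFibrationT T p) (e : B ≃ B') :
    IsFibrationT T (e ∘ p) := by
  obtain ⟨F, hF, eF⟩ := hp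
  refine ⟨fun b => F (e.symm b), fun b => hF _, fun b => ⟨(eF _).some.trans ?_⟩⟩
  exact Equiv.subtypeEquivRight fun _ => e.eq_symm_apply

end Fibration

theorem SFin.finite : ∀ n, Finite (SFin.{u} n)
  | 0 => inferInstanceAs (Finite PEmpty)
  | n + 1 => have := SFin.finite n; inferInstanceAs (Finite (PUnit ⊕ SFin n))

namespace SCat

variable (C : SCat.{u})

def fullSubcat (P : C.Obj → Prop) : SCat.{u} where
  Obj := {x : C.Obj // P x}
  Hom a b := C.Hom a.1 b.1
  id a := C.id a.1
  comp g f := C.comp g f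
  id_comp f := C.id_comp f
  comp_id f := C.comp_id f
  assoc h g f := C.assoc h g f

instance [Finite C.Obj] (P : C.Obj → Prop) : Finite (C.fullSubcat P).Obj := Subtype.finite

def IsSource (z : C.Obj) : Prop :=
  ∀ {x : C.Obj} (f : C.Hom x z), ∃ _ : x = z, HEq f (C.id x)

variable {C}

theorem IsSource.ne_of_hom {z x y : C.Obj} (hz : C.IsSource z) (hx : x ≠ z) (f : C.Hom x y) :
    y ≠ z := by
  rintro rfl
  exact hx (hz f).1

theorem IsSource.rcObj_y_ne {z : C.Obj} (hz : C.IsSource z) (o : RCObj C z) : o.y ≠ z := by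
  obtain ⟨y, f, nonid⟩ := o
  rintro (rfl : y = z)
  exact nonid rfl (hz f).2

end SCat

def IsInverse.restrict {C : SCat.{u}} (inv : IsInverse C) (P : C.Obj → Prop) :
    IsInverse (C.fullSubcat P) where
  rank x := inv.rank x.1
  rank_le f := inv.rank_le f
  createsId f h :=
    let ⟨h1, h2⟩ := inv.createsId f h
    ⟨Subtype.ext h1, h2⟩

theorem IsInverse.isSource_of_rank_max {C : SCat.{u}} (inv : IsInverse C) {z : C.Obj}
    (hz : ∀ x, inv.rank x ≤ inv.rank z) : C.IsSource z :=
  fun f => inv.createsId f (le_antisymm (hz _) (inv.rank_le f))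

def SFunctor.restrict {C : SCat.{u}} (X : SFunctor C) (P : C.Obj → Prop) :
    SFunctor (C.fullSubcat P) where
  obj a := X.obj a.1
  map f a := X.map f a
  map_id x a := X.map_id x.1 a
  map_comp g f a := X.map_comp g f a

section Restrict

variable {C : SCat.{u}} {P : C.Obj → Prop}

def RCObj.fullSubcatEquiv (hP : ∀ {x y : C.Obj}, P x → C.Hom x y → P y)
    (w : (C.fullSubcat P).Obj) : RCObj (C.fullSubcat P) w ≃ RCObj C w.1 where
  toFun o := ⟨o.y.1, o.f, fun h hf => o.nonid (Subtype.ext h) hf⟩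
  invFun o := ⟨⟨o.y, hP w.2 o.f⟩, o.f, fun h hf => o.nonid (congrArg Subtype.val h) hf⟩
  left_inv _ := rfl
  right_inv _ := rfl

def Matching.restrictEquiv (hP : ∀ {x y : C.Obj}, P x → C.Hom x y → P y) (X : SFunctor C)
    (w : (C.fullSubcat P).Obj) :
    Matching X w.1 ≃ Matching (X.restrict P) w :=
  let e := RCObj.fullSubcatEquiv hP w
  { toFun c := ⟨fun o => c.1 (e o), fun o o' h hh => c.2 (e o) (e o') h hh⟩
    invFun c := ⟨fun o => c.1 (e.symm o), fun o o' h hh => c.2 (e.symm o) (e.symm o') h hh⟩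
    left_inv _ := rfl
    right_inv _ := rfl }

theorem ReedyFibrant.restrict {T : TLTT.{u}} {X : SFunctor C}
    (hP : ∀ {x y : C.Obj}, P x → C.Hom x y → P y) (hR : ReedyFibrant T X) :
    ReedyFibrant T (X.restrict P) :=
  fun w => (hR w.1).equiv_comp (Matching.restrictEquiv hP X w)

end Restrict

section Decomposition

variable {C : SCat.{u}} {X : SFunctor C} {z : C.Obj}

def SLimit.toMatching (hz : C.IsSource z) (c : SLimit (X.restrict (· ≠ z))) : Matching X z :=
  ⟨fun o => c.1 ⟨o.y, hz.rcObj_y_ne o⟩, fun o o' h _ => c.2 ⟨o.y, _⟩ ⟨o'.y, _⟩ h⟩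

open Classical in
noncomputable def SLimit.extend (c : SLimit (X.restrict (· ≠ z))) (a : X.obj z) :
    ∀ x, X.obj x :=
  (Equiv.piSplitAt z X.obj).symm (a, c.1)

theorem SLimit.extend_self (c : SLimit (X.restrict (· ≠ z))) (a : X.obj z) :
    c.extend a z = a := by
  unfold SLimit.extend Equiv.piSplitAt
  exact dif_pos rfl

theorem SLimit.extend_of_ne (c : SLimit (X.restrict (· ≠ z))) (a : X.obj z) {x : C.Obj}
    (hx : x ≠ z) : c.extend a x = c.1 ⟨x, hx⟩ := by
  unfold SLimit.extend Equiv.piSplitAt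
  exact dif_neg hx

theorem SLimit.map_extend (hz : C.IsSource z) {c : SLimit (X.restrict (· ≠ z))} {a : X.obj z}
    (ha : matchMap X z a = c.toMatching hz) {x y : C.Obj} (f : C.Hom x y) :
    X.map f (c.extend a x) = c.extend a y := by
  by_cases hx : x = z
  · subst hx
    by_cases hy : y = x
    · subst hy
      rw [eq_of_heq (hz f).2, X.map_id]
    · rw [c.extend_self, c.extend_of_ne a hy]
      exact congrFun (congrArg Subtype.val ha) ⟨y, f, fun h _ => hy h.symm⟩
  · have hy := hz.ne_of_hom hx f
    rw [c.extend_of_ne a hx, c.extend_of_ne a hy]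
    exact c.2 ⟨x, hx⟩ ⟨y, hy⟩ f

open Classical in
noncomputable def SLimit.equivSigmaFiber (hz : C.IsSource z) :
    SLimit X ≃
      Σ c : SLimit (X.restrict (· ≠ z)), {a : X.obj z // matchMap X z a = c.toMatching hz} where
  toFun s := ⟨⟨fun x => s.1 x.1, fun x y f => s.2 x.1 y.1 f⟩, s.1 z,
    Subtype.ext (funext fun o => s.2 z o.y o.f)⟩
  invFun t := ⟨t.1.extend t.2.1, fun _ _ f => SLimit.map_extend hz t.2.2 f⟩
  left_inv s := Subtype.ext ((Equiv.piSplitAt z X.obj).symm_apply_apply s.1)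
  right_inv := fun ⟨c, a, _⟩ => Sigma.subtype_ext
    (Subtype.ext (funext fun x => c.extend_of_ne a x.2)) (c.extend_self a)

end Decomposition

instance SLimit.instUniqueOfIsEmpty {C : SCat.{u}} [IsEmpty C.Obj] (X : SFunctor C) :
    Unique (SLimit X) where
  default := ⟨isEmptyElim, isEmptyElim⟩
  uniq _ := Subtype.ext (funext isEmptyElim)

theorem IsInverse.essFib_sLimit {T : TLTT.{u}} {C : SCat.{u}} (inv : IsInverse C)
    [Finite C.Obj] {X : SFunctor C} (hR : ReedyFibrant T X) : EssFib T (SLimit X) := by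
  induction hC : Nat.card C.Obj generalizing C with
  | zero =>
    have : IsEmpty C.Obj := Finite.card_eq_zero_iff.mp hC
    exact EssFib.of_unique
  | succ n ih =>
    classical
    have : Nonempty C.Obj := Finite.card_pos_iff.mp (by omega)
    obtain ⟨z, hmax⟩ := Finite.exists_max inv.rank
    have hz : C.IsSource z := inv.isSource_of_rank_max hmax
    have hcard : Nat.card {x : C.Obj // x ≠ z} = n := by
      have := Nat.card_congr (Equiv.optionSubtypeNe z)
      rw [Finite.card_option, hC] at this
      omega
    exact (SLimit.equivSigmaFiber hz).essFib
      ((ih (inv.restrict _) (hR.restrict hz.ne_of_hom) hcard).sigma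
        fun c => (hR z).essFib_fiber _)

theorem finite_inverse_reedy_fibrant_limit_general (T : TLTT.{u}) (C : SCat.{u})
    (inv : IsInverse C) (hfin : ∃ n : ℕ, Nonempty (C.Obj ≃ SFin.{u} n))
    (X : SFunctor C) (hR : ReedyFibrant T X) :
    ∃ B : Type u, T.Fib B ∧ Nonempty (SLimit X ≃ B) := by
  obtain ⟨n, ⟨e⟩⟩ := hfin
  have := SFin.finite.{u} n
  have : Finite C.Obj := .of_equiv _ e.symm
  exact inv.essFib_sLimit hR

/-- Every Reedy fibrant diagram over a finite inverse strict category has a fibrant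
limit: its strict limit is strictly isomorphic to a fibrant type. -/
theorem finite_inverse_reedy_fibrant_limit (T : TLTT.{u}) (C : SCat.{u})
    (inv : IsInverse C) (hfin : ∃ n : ℕ, Nonempty (C.Obj ≃ SFin.{u} n))
    (X : SFunctor C) (hX : ∀ z : C.Obj, T.Fib (X.obj z)) (hR : ReedyFibrant T X) :
    ∃ B : Type u, T.Fib B ∧ Nonempty (SLimit X ≃ B) :=
  finite_inverse_reedy_fibrant_limit_general T C inv hfin X hR
end

section
/- Every diagram X : C → U over an admissible inverse category C admits a Reedy fibrant replacement: there exists a Reedy fibrant diagram Y : C → U and a natural transformation η : X → Y which is a levelwise equivalence of fibrant types. -/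
universe u

/-- The reduced coslice `z ⫽ C` as a strict category. -/
def RC (C : SCat.{u}) (z : C.Obj) : SCat.{u} where
  Obj := RCObj C z
  Hom o o' := { h : C.Hom o.y o'.y // C.comp h o.f = o'.f }
  id o := ⟨C.id o.y, C.id_comp o.f⟩
  comp g f := ⟨C.comp g.1 f.1, by rw [← C.assoc, f.2, g.2]⟩
  id_comp f := Subtype.ext (C.id_comp f.1)
  comp_id f := Subtype.ext (C.comp_id f.1)
  assoc h g f := Subtype.ext (C.assoc h.1 g.1 f.1)

/-- A strict natural transformation between diagrams. -/
structure SNat {C : SCat.{u}} (X Y : SFunctor C) where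
  app : ∀ z : C.Obj, X.obj z → Y.obj z
  naturality : ∀ {x y : C.Obj} (f : C.Hom x y) (a : X.obj x),
      Y.map f (app x a) = app y (X.map f a)

/-- An inverse category is admissible if for every object `z`, Reedy fibrant diagrams
over the reduced coslice `z ⫽ C` have fibrant limits. -/
def Admissible (T : TLTT.{u}) (C : SCat.{u}) : Prop :=
  ∀ (z : C.Obj) (Y : SFunctor (RC C z)),
    (∀ o, T.Fib (Y.obj o)) → ReedyFibrant T Y →
    ∃ B : Type u, T.Fib B ∧ Nonempty (SLimit Y ≃ B)

/-!
The replacement is built level by level along the rank. Over an inverse category every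
non-identity map lowers the rank, so a diagram under `X` is determined by its objects, its unit
components and its cones to the reduced coslices; a partially built replacement is such a
`Prediagram`. Once the levels below rank `n` are built, the restriction to `z ⫽ C` of an object
`z` of rank `n` is Reedy fibrant, because the reduced coslices of `z ⫽ C` are reduced coslices of
`C`. Admissibility then gives a fibrant model `M z` of the matching object, and the new level is
the mapping cocylinder of `X z → M z`: its inclusion of `X z` is an equivalence (path induction)
and its projection to `M z` is a fibration. Built levels never change afterwards, so the
replacement takes each level from the stage that builds it.
-/

theorem eq_iff_eq_of_heq {α β : Type u} {a b : α} {a' b' : β} (ha : a ≍ a') (hb : b ≍ b') :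
    a = b ↔ a' = b' := by
  obtain rfl := type_eq_of_heq ha
  rw [eq_of_heq ha, eq_of_heq hb]

theorem RCObj.ext_heq {C : SCat.{u}} {z : C.Obj} {p q : RCObj C z} (hy : p.y = q.y)
    (hf : p.f ≍ q.f) : p = q := by
  obtain ⟨y, f, _⟩ := p
  obtain ⟨y', f', _⟩ := q
  dsimp only at hy hf
  subst hy
  obtain rfl := eq_of_heq hf
  rfl

namespace IsInverse

variable {C : SCat.{u}} (inv : IsInverse C)

theorem rank_lt_of_nonid {x y : C.Obj} (f : C.Hom x y) (hf : x = y → ¬ f ≍ C.id x) :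
    inv.rank y < inv.rank x := by
  refine (inv.rank_le f).lt_of_ne fun h => ?_
  obtain ⟨e, he⟩ := inv.createsId f h.symm
  exact hf e he

theorem rank_lt {z : C.Obj} (o : RCObj C z) : inv.rank o.y < inv.rank z :=
  inv.rank_lt_of_nonid o.f o.nonid

theorem eq_id_of_not_rank_lt {x y : C.Obj} (f : C.Hom x y) (h : ¬ inv.rank y < inv.rank x) :
    ∃ _ : x = y, f ≍ C.id x :=
  inv.createsId f ((inv.rank_le f).antisymm (not_lt.mp h)).symm

abbrev rcObj {x y : C.Obj} (f : C.Hom x y) (h : inv.rank y < inv.rank x) : RCObj C x :=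
  ⟨y, f, fun e _ => (e ▸ h).false⟩

theorem rank_lt_of_rcObj_RC {z : C.Obj} {o : RCObj C z} (q : RCObj (RC C z) o) :
    inv.rank q.y.y < inv.rank o.y := by
  obtain ⟨⟨y, f, hf⟩, ⟨k, hk⟩, hq⟩ := q
  refine inv.rank_lt_of_nonid k fun e hid => ?_
  dsimp only at e hid hk ⊢
  subst e
  obtain rfl := eq_of_heq hid
  rw [C.id_comp] at hk
  subst hk
  exact hq rfl (heq_of_eq (Subtype.ext rfl))

/-- The reduced coslice of `o` in `z ⫽ C` is the reduced coslice of `o.y` in `C`. -/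
def rcObjOfRC {z : C.Obj} (o : RCObj C z) (q : RCObj (RC C z) o) : RCObj C o.y :=
  inv.rcObj q.f.1 (inv.rank_lt_of_rcObj_RC q)

def rcObjToRC {z : C.Obj} (o : RCObj C z) (w : RCObj C o.y) : RCObj (RC C z) o :=
  ⟨inv.rcObj (C.comp w.f o.f) ((inv.rank_lt w).trans (inv.rank_lt o)), ⟨w.f, rfl⟩,
    fun e _ => (congrArg (fun t : RCObj C z => inv.rank t.y) e ▸ inv.rank_lt w).false⟩

theorem rcObjToRC_rcObjOfRC {z : C.Obj} (o : RCObj C z) (q : RCObj (RC C z) o) :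
    inv.rcObjToRC o (inv.rcObjOfRC o q) = q := by
  have hy : (inv.rcObjToRC o (inv.rcObjOfRC o q)).y = q.y :=
    RCObj.ext_heq rfl (heq_of_eq q.f.2)
  refine RCObj.ext_heq hy ((Subtype.heq_iff_coe_eq fun h => ?_).mpr rfl)
  show C.comp h o.f = C.comp q.f.1 o.f ↔ _
  rw [q.f.2]
  exact Iff.rfl

end IsInverse

namespace ReedyReplacement

section Fibrant

variable {T : TLTT.{u}}

/-- `IsFibrationT T p` is `HasFibrantFibers T fun e b => p e = b` by definition. -/
def HasFibrantFibers (T : TLTT.{u}) {E B : Type u} (R : E → B → Prop) : Prop :=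
  ∃ F : B → Type u, (∀ b, T.Fib (F b)) ∧ ∀ b, Nonempty (F b ≃ { e : E // R e b })

theorem HasFibrantFibers.of_fiberEquiv {E B E' B' : Type u} {R : E → B → Prop}
    (hR : HasFibrantFibers T R) {R' : E' → B' → Prop} (g : B' → B)
    (e : ∀ b, { x // R' x b } ≃ { x // R x (g b) }) : HasFibrantFibers T R' := by
  obtain ⟨F, hF, hE⟩ := hR
  exact ⟨fun b => F (g b), fun b => hF (g b), fun b => ⟨(hE (g b)).some.trans (e b).symm⟩⟩

def IsEquivT.ofCastEq {A B B' : Type u} (h : B = B') {f : A → B} {g : A → B'}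
    (hfg : ∀ a, cast h (f a) = g a) (hg : IsEquivT T g) : IsEquivT T f := by
  subst h
  obtain rfl : f = g := funext hfg
  exact hg

def Cocyl (T : TLTT.{u}) {A B : Type u} (f : A → B) : Type u :=
  Σ a : A, Σ b : B, T.Id (f a) b

namespace Cocyl

variable {A B : Type u} (f : A → B)

def incl (a : A) : Cocyl T f :=
  ⟨a, f a, T.idrefl (f a)⟩

theorem fib (hA : T.Fib A) (hB : T.Fib B) : T.Fib (Cocyl T f) :=
  T.fib_sigma hA fun a => T.fib_sigma hB fun b => T.fib_id hB (f a) b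

def inclIsEquiv (hA : T.Fib A) (hB : T.Fib B) : IsEquivT T (incl (T := T) f) := by
  refine ⟨⟨fun v => v.1, fun ⟨a, b, p⟩ => ?_⟩, ⟨fun v => v.1, fun a => T.idrefl a⟩⟩
  exact T.J (f a) (fun b p => T.Id (incl f a) ⟨a, b, p⟩)
    (fun _ _ => T.fib_id (fib f hA hB) _ _) (T.idrefl _) b p

def fiberEquiv (b : B) : { v : Cocyl T f // v.2.1 = b } ≃ Σ a : A, T.Id (f a) b where
  toFun v := ⟨v.1.1, cast (congrArg _ v.2) v.1.2.2⟩
  invFun w := ⟨⟨w.1, b, w.2⟩, rfl⟩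
  left_inv := by
    rintro ⟨⟨a, b, p⟩, rfl⟩
    rfl
  right_inv _ := rfl

theorem hasFibrantFibers_proj (hA : T.Fib A) (hB : T.Fib B) :
    HasFibrantFibers T (fun (v : Cocyl T f) b => v.2.1 = b) :=
  ⟨fun b => Σ a : A, T.Id (f a) b, fun b => T.fib_sigma hA fun a => T.fib_id hB (f a) b,
    fun b => ⟨(fiberEquiv f b).symm⟩⟩

end Cocyl

end Fibrant

structure Prediagram {C : SCat.{u}} (X : SFunctor C) where
  obj : C.Obj → Type u
  unit : ∀ z, X.obj z → obj z
  proj : ∀ z, obj z → ∀ o : RCObj C z, obj o.y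

namespace Prediagram

section Basic

variable {T : TLTT.{u}} {C : SCat.{u}} (inv : IsInverse C) {X : SFunctor C}

def ofFunctor (X : SFunctor C) : Prediagram X :=
  ⟨X.obj, fun _ a => a, fun _ a o => X.map o.f a⟩

def map (P : Prediagram X) {x y : C.Obj} (f : C.Hom x y) (a : P.obj x) : P.obj y :=
  if h : inv.rank y < inv.rank x then P.proj x a (inv.rcObj f h)
  else cast (congrArg P.obj (inv.eq_id_of_not_rank_lt f h).fst) a

theorem map_id (P : Prediagram X) (z : C.Obj) (a : P.obj z) : P.map inv (C.id z) a = a := by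
  rw [map, dif_neg (lt_irrefl _), cast_eq]

theorem map_of_rank_lt (P : Prediagram X) {x y : C.Obj} (f : C.Hom x y)
    (h : inv.rank y < inv.rank x) (a : P.obj x) :
    P.map inv f a = P.proj x a (inv.rcObj f h) :=
  dif_pos h

def Matching (P : Prediagram X) (z : C.Obj) : Type u :=
  { c : ∀ o : RCObj C z, P.obj o.y //
    ∀ (o o' : RCObj C z) (h : C.Hom o.y o'.y), C.comp h o.f = o'.f →
      P.map inv h (c o) = c o' }

structure IsReplacementAt (T : TLTT.{u}) (P : Prediagram X) (z : C.Obj) : Prop where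
  fib : T.Fib (P.obj z)
  map_comp : ∀ {y w : C.Obj} (g : C.Hom y w) (f : C.Hom z y) (a : P.obj z),
    P.map inv (C.comp g f) a = P.map inv g (P.map inv f a)
  map_unit : ∀ {y : C.Obj} (f : C.Hom z y) (a : X.obj z),
    P.map inv f (P.unit z a) = P.unit y (X.map f a)
  reedy : HasFibrantFibers T
    fun (a : P.obj z) (c : P.Matching inv z) => ∀ o, P.map inv o.f a = c.1 o

def IsReplacementBelow (T : TLTT.{u}) (n : ℕ) (P : Prediagram X) : Prop :=
  ∀ z, inv.rank z < n → P.IsReplacementAt inv T z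

theorem IsReplacementBelow.mono {P : Prediagram X} {m n : ℕ}
    (hP : P.IsReplacementBelow inv T n) (h : m ≤ n) : P.IsReplacementBelow inv T m :=
  fun z hz => hP z (hz.trans_le h)

structure AgreeAt (P Q : Prediagram X) (z : C.Obj) : Prop where
  obj_eq : P.obj z = Q.obj z
  unit_heq : ∀ a, P.unit z a ≍ Q.unit z a
  proj_heq : ∀ {a b}, a ≍ b → ∀ o, P.proj z a o ≍ Q.proj z b o

namespace AgreeAt

variable {P Q R : Prediagram X} {z : C.Obj}

theorem refl (P : Prediagram X) (z : C.Obj) : P.AgreeAt P z :=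
  ⟨rfl, fun _ => .rfl, fun h o => by rw [eq_of_heq h]⟩

theorem symm (h : P.AgreeAt Q z) : Q.AgreeAt P z :=
  ⟨h.obj_eq.symm, fun a => (h.unit_heq a).symm, fun hab o => (h.proj_heq hab.symm o).symm⟩

theorem trans (h : P.AgreeAt Q z) (h' : Q.AgreeAt R z) : P.AgreeAt R z :=
  ⟨h.obj_eq.trans h'.obj_eq, fun a => (h.unit_heq a).trans (h'.unit_heq a),
    fun hab o => (h.proj_heq (cast_heq h.obj_eq _).symm o).trans
      (h'.proj_heq ((cast_heq _ _).trans hab) o)⟩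

theorem map_heq (h : P.AgreeAt Q z) {y : C.Obj} (f : C.Hom z y) {a : P.obj z} {b : Q.obj z}
    (hab : a ≍ b) : P.map inv f a ≍ Q.map inv f b := by
  by_cases hy : inv.rank y < inv.rank z
  · simp only [map, dif_pos hy]
    exact h.proj_heq hab _
  · simp only [map, dif_neg hy]
    exact (cast_heq _ _).trans (hab.trans (cast_heq _ _).symm)

end AgreeAt

def Matching.transfer {P Q : Prediagram X} {z : C.Obj} (h : ∀ o : RCObj C z, P.AgreeAt Q o.y)
    (c : P.Matching inv z) : Q.Matching inv z :=
  ⟨fun o => cast (h o).obj_eq (c.1 o), fun o o' k hk => eq_of_heq <|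
    ((h o).map_heq inv k (cast_heq _ _).symm).symm.trans
      ((heq_of_eq (c.2 o o' k hk)).trans (cast_heq _ _).symm)⟩

theorem IsReplacementAt.of_agreeAt {P Q : Prediagram X} {z : C.Obj}
    (hQ : Q.IsReplacementAt inv T z) (h : ∀ w, inv.rank w ≤ inv.rank z → P.AgreeAt Q w) :
    P.IsReplacementAt inv T z where
  fib := (h z le_rfl).obj_eq ▸ hQ.fib
  map_comp g f a := by
    have hz := h z le_rfl
    have hfa := hz.map_heq inv f (cast_heq hz.obj_eq a).symm
    refine eq_of_heq ((hz.map_heq inv (C.comp g f) (cast_heq hz.obj_eq a).symm).trans ?_)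
    rw [hQ.map_comp]
    exact ((h _ (inv.rank_le f)).map_heq inv g hfa).symm
  map_unit f a := by
    refine eq_of_heq (((h z le_rfl).map_heq inv f ((h z le_rfl).unit_heq a)).trans ?_)
    rw [hQ.map_unit]
    exact ((h _ (inv.rank_le f)).unit_heq _).symm
  reedy := by
    refine hQ.reedy.of_fiberEquiv (Matching.transfer inv fun o => h o.y (inv.rank_lt o).le)
      fun c => Equiv.subtypeEquiv (Equiv.cast (h z le_rfl).obj_eq) fun a =>
        forall_congr' fun o => ?_
    exact eq_iff_eq_of_heq ((h z le_rfl).map_heq inv o.f (cast_heq _ a).symm)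
      (cast_heq _ _).symm

end Basic

section Restriction

variable {T : TLTT.{u}} {C : SCat.{u}} (inv : IsInverse C) {X : SFunctor C}

def restrict (P : Prediagram X) (z : C.Obj) (hP : P.IsReplacementBelow inv T (inv.rank z)) :
    SFunctor (RC C z) where
  obj o := P.obj o.y
  map h a := P.map inv h.1 a
  map_id o a := P.map_id inv o.y a
  map_comp g f a := (hP _ (inv.rank_lt _)).map_comp g.1 f.1 a

variable {P : Prediagram X} {z : C.Obj} (hP : P.IsReplacementBelow inv T (inv.rank z))

def matchingOfRestrict (o : RCObj C z) (d : _root_.Matching (P.restrict inv z hP) o) :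
    P.Matching inv o.y :=
  ⟨fun w => d.1 (inv.rcObjToRC o w), fun w w' k hk =>
    d.2 (inv.rcObjToRC o w) (inv.rcObjToRC o w')
      ⟨k, (C.assoc k w.f o.f).trans (congrArg (C.comp · o.f) hk)⟩ (Subtype.ext hk)⟩

theorem reedyFibrant_restrict : ReedyFibrant T (P.restrict inv z hP) := by
  intro o
  refine (hP o.y (inv.rank_lt o)).reedy.of_fiberEquiv (matchingOfRestrict inv hP o) fun d =>
    Equiv.subtypeEquivRight fun a =>
      ⟨fun h w => congrFun (congrArg Subtype.val h) (inv.rcObjToRC o w), fun h => ?_⟩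
  refine Subtype.ext (funext fun q => ?_)
  rw [← inv.rcObjToRC_rcObjOfRC o q]
  exact h _

def limitEquivMatching : SLimit (P.restrict inv z hP) ≃ P.Matching inv z where
  toFun c := ⟨c.1, fun o o' k hk => c.2 o o' ⟨k, hk⟩⟩
  invFun c := ⟨c.1, fun o o' k => c.2 o o' k.1 k.2⟩
  left_inv _ := rfl
  right_inv _ := rfl

end Restriction

section NextLevel

variable {T : TLTT.{u}} {C : SCat.{u}} (inv : IsInverse C) {X : SFunctor C} {P : Prediagram X}
  {z : C.Obj}

def unitCone (hP : P.IsReplacementBelow inv T (inv.rank z)) (a : X.obj z) :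
    P.Matching inv z :=
  ⟨fun o => P.unit o.y (X.map o.f a), fun o o' k hk => by
    rw [(hP o.y (inv.rank_lt o)).map_unit, ← X.map_comp, hk]⟩

theorem exists_fibrant_matching (adm : Admissible T C)
    (hP : P.IsReplacementBelow inv T (inv.rank z)) :
    ∃ B : Type u, T.Fib B ∧ Nonempty (P.Matching inv z ≃ B) := by
  obtain ⟨B, hB, ⟨e⟩⟩ := adm z (P.restrict inv z hP) (fun o => (hP o.y (inv.rank_lt o)).fib)
    (reedyFibrant_restrict inv hP)
  exact ⟨B, hB, ⟨(limitEquivMatching inv hP).symm.trans e⟩⟩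

variable (adm : Admissible T C) (hP : P.IsReplacementBelow inv T (inv.rank z))

noncomputable def fibrantMatching : Type u :=
  (exists_fibrant_matching inv adm hP).choose

theorem fib_fibrantMatching : T.Fib (fibrantMatching inv adm hP) :=
  (exists_fibrant_matching inv adm hP).choose_spec.1

noncomputable def fibrantMatchingEquiv : P.Matching inv z ≃ fibrantMatching inv adm hP :=
  (exists_fibrant_matching inv adm hP).choose_spec.2.some

noncomputable def nextLevel : Type u :=
  Cocyl T fun a : X.obj z => fibrantMatchingEquiv inv adm hP (P.unitCone inv hP a)

theorem fib_nextLevel (hX : T.Fib (X.obj z)) : T.Fib (nextLevel inv adm hP) :=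
  Cocyl.fib _ hX (fib_fibrantMatching inv adm hP)

end NextLevel

section Step

variable {T : TLTT.{u}} {C : SCat.{u}} (inv : IsInverse C) (adm : Admissible T C)
  {X : SFunctor C} {P : Prediagram X} {n : ℕ} (G : P.IsReplacementBelow inv T n)

noncomputable def stepObj (z : C.Obj) : Type u :=
  if inv.rank z < n then P.obj z
  else if h : inv.rank z = n then nextLevel inv adm (G.mono inv h.le) else X.obj z

variable {z : C.Obj}

theorem stepObj_of_lt (h : inv.rank z < n) : stepObj inv adm G z = P.obj z :=
  if_pos h

theorem stepObj_of_eq (h : inv.rank z = n) :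
    stepObj inv adm G z = nextLevel inv adm (G.mono inv h.le) := by
  rw [stepObj, if_neg h.not_lt, dif_pos h]

theorem stepObj_of_gt (h : n < inv.rank z) : stepObj inv adm G z = X.obj z := by
  rw [stepObj, if_neg (by omega), dif_neg (by omega)]

noncomputable def stepUnit (z : C.Obj) (a : X.obj z) : stepObj inv adm G z :=
  if h : inv.rank z < n then cast (stepObj_of_lt inv adm G h).symm (P.unit z a)
  else if h' : inv.rank z = n then cast (stepObj_of_eq inv adm G h').symm (Cocyl.incl _ a)
  else cast (stepObj_of_gt inv adm G (by omega)).symm a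

noncomputable def stepProj (z : C.Obj) (e : stepObj inv adm G z) (o : RCObj C z) :
    stepObj inv adm G o.y :=
  if h : inv.rank z < n then
    cast (stepObj_of_lt inv adm G ((inv.rank_lt o).trans h)).symm
      (P.proj z (cast (stepObj_of_lt inv adm G h) e) o)
  else if h' : inv.rank z = n then
    cast (stepObj_of_lt inv adm G (h' ▸ inv.rank_lt o)).symm
      (((fibrantMatchingEquiv inv adm _).symm (cast (stepObj_of_eq inv adm G h') e).2.1).1 o)
  else stepUnit inv adm G o.y (X.map o.f (cast (stepObj_of_gt inv adm G (by omega)) e))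

noncomputable def step : Prediagram X :=
  ⟨stepObj inv adm G, stepUnit inv adm G, stepProj inv adm G⟩

theorem step_agreeAt (h : inv.rank z < n) : (step inv adm G).AgreeAt P z where
  obj_eq := stepObj_of_lt inv adm G h
  unit_heq a := by
    show stepUnit inv adm G z a ≍ _
    rw [stepUnit, dif_pos h]
    exact cast_heq _ _
  proj_heq {e e'} he o := by
    show stepProj inv adm G z e o ≍ _
    unfold stepProj
    obtain rfl : cast (stepObj_of_lt inv adm G h) e = e' := eq_of_heq ((cast_heq _ e).trans he)
    rw [dif_pos h]
    exact cast_heq _ _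

theorem step_unit_of_eq (h : inv.rank z = n) (a : X.obj z) :
    cast (stepObj_of_eq inv adm G h) ((step inv adm G).unit z a) = Cocyl.incl _ a := by
  show cast _ (stepUnit inv adm G z a) = _
  rw [stepUnit, dif_neg h.not_lt, dif_pos h]
  exact eq_of_heq ((cast_heq _ _).trans (cast_heq _ _))

theorem step_map_of_eq (h : inv.rank z = n) {y : C.Obj} (f : C.Hom z y)
    (hy : inv.rank y < inv.rank z) (e : (step inv adm G).obj z) :
    (step inv adm G).map inv f e = cast (stepObj_of_lt inv adm G (h ▸ hy)).symm
      (((fibrantMatchingEquiv inv adm (G.mono inv h.le)).symm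
        (cast (stepObj_of_eq inv adm G h) e).2.1).1 (inv.rcObj f hy)) := by
  rw [map_of_rank_lt inv _ f hy]
  show stepProj inv adm G z e _ = _
  unfold stepProj
  rw [dif_neg h.not_lt, dif_pos h]

theorem step_map_comp_of_eq (h : inv.rank z = n) {y w : C.Obj} (g : C.Hom y w)
    (f : C.Hom z y) (e : (step inv adm G).obj z) :
    (step inv adm G).map inv (C.comp g f) e =
      (step inv adm G).map inv g ((step inv adm G).map inv f e) := by
  by_cases hy : inv.rank y < inv.rank z
  · have hw : inv.rank w < inv.rank z := (inv.rank_le g).trans_lt hy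
    set c := (fibrantMatchingEquiv inv adm (G.mono inv h.le)).symm
      (cast (stepObj_of_eq inv adm G h) e).2.1
    rw [step_map_of_eq inv adm G h _ hw, step_map_of_eq inv adm G h f hy]
    refine eq_of_heq ((cast_heq _ _).trans ?_)
    rw [← c.2 (inv.rcObj f hy) (inv.rcObj (C.comp g f) hw) g rfl]
    exact ((step_agreeAt inv adm G (h ▸ hy)).map_heq inv g (cast_heq _ _)).symm
  · obtain ⟨rfl, hf⟩ := inv.eq_id_of_not_rank_lt f hy
    obtain rfl := eq_of_heq hf
    rw [C.comp_id, map_id]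

theorem step_map_unit_of_eq (h : inv.rank z = n) {y : C.Obj} (f : C.Hom z y) (a : X.obj z) :
    (step inv adm G).map inv f ((step inv adm G).unit z a) =
      (step inv adm G).unit y (X.map f a) := by
  by_cases hy : inv.rank y < inv.rank z
  · rw [step_map_of_eq inv adm G h f hy, step_unit_of_eq inv adm G h]
    refine eq_of_heq ((cast_heq _ _).trans ?_)
    rw [Cocyl.incl, Equiv.symm_apply_apply]
    exact ((step_agreeAt inv adm G (h ▸ hy)).unit_heq _).symm
  · obtain ⟨rfl, hf⟩ := inv.eq_id_of_not_rank_lt f hy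
    obtain rfl := eq_of_heq hf
    rw [map_id, X.map_id]

/-- The fiber of the matching map at the new level is a fiber of the cocylinder's projection. -/
theorem step_reedy_of_eq (hX : T.Fib (X.obj z)) (h : inv.rank z = n) :
    HasFibrantFibers T fun (e : (step inv adm G).obj z) (c : (step inv adm G).Matching inv z) =>
      ∀ o, (step inv adm G).map inv o.f e = c.1 o := by
  have ho (o : RCObj C z) : (step inv adm G).AgreeAt P o.y :=
    step_agreeAt inv adm G (h ▸ inv.rank_lt o)
  refine (Cocyl.hasFibrantFibers_proj _ hX (fib_fibrantMatching inv adm _)).of_fiberEquiv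
    (fun c => fibrantMatchingEquiv inv adm _ (Matching.transfer inv ho c)) fun c =>
    Equiv.subtypeEquiv (Equiv.cast (stepObj_of_eq inv adm G h)) fun e => ?_
  refine (forall_congr' fun o => ?_).trans
    (funext_iff.symm.trans (Subtype.ext_iff.symm.trans (Equiv.symm_apply_eq _)))
  rw [step_map_of_eq inv adm G h o.f (inv.rank_lt o)]
  exact eq_iff_eq_of_heq (cast_heq _ _) (cast_heq _ _).symm

theorem isReplacementAt_step_of_eq (hX : T.Fib (X.obj z)) (h : inv.rank z = n) :
    (step inv adm G).IsReplacementAt inv T z where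
  fib := by
    show T.Fib (stepObj inv adm G z)
    rw [stepObj_of_eq inv adm G h]
    exact fib_nextLevel inv adm _ hX
  map_comp := step_map_comp_of_eq inv adm G h
  map_unit := step_map_unit_of_eq inv adm G h
  reedy := step_reedy_of_eq inv adm G hX h

theorem isReplacementBelow_step (hX : ∀ z, T.Fib (X.obj z)) :
    (step inv adm G).IsReplacementBelow inv T (n + 1) := by
  intro z hz
  rcases (Nat.lt_succ_iff.mp hz).lt_or_eq with h | h
  · exact (G z h).of_agreeAt inv fun w hw => step_agreeAt inv adm G (hw.trans_lt h)
  · exact isReplacementAt_step_of_eq inv adm G (hX z) h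

end Step

section Functor

variable {T : TLTT.{u}} {C : SCat.{u}} (inv : IsInverse C) {X : SFunctor C} (P : Prediagram X)
  (hP : ∀ z, P.IsReplacementAt inv T z)

def toSFunctor : SFunctor C where
  obj := P.obj
  map := P.map inv
  map_id := P.map_id inv
  map_comp g f a := (hP _).map_comp g f a

def unitNat : SNat X (P.toSFunctor inv hP) where
  app := P.unit
  naturality f a := (hP _).map_unit f a

theorem reedyFibrant_toSFunctor : ReedyFibrant T (P.toSFunctor inv hP) := fun z =>
  (hP z).reedy.of_fiberEquiv id fun _ =>
    Equiv.subtypeEquivRight fun _ => Subtype.ext_iff.trans funext_iff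

end Functor

section Tower

variable {T : TLTT.{u}} {C : SCat.{u}} (inv : IsInverse C) (adm : Admissible T C)
  {X : SFunctor C} (hX : ∀ z, T.Fib (X.obj z))

noncomputable def tower : ∀ n : ℕ, (P : Prediagram X) ×' P.IsReplacementBelow inv T n
  | 0 => ⟨ofFunctor X, fun _ h => absurd h (Nat.not_lt_zero _)⟩
  | n + 1 => ⟨step inv adm (tower n).2, isReplacementBelow_step inv adm (tower n).2 hX⟩

theorem tower_agreeAt {z : C.Obj} {m k : ℕ} (hz : inv.rank z < m) (hk : m ≤ k) :
    (tower inv adm hX k).1.AgreeAt (tower inv adm hX m).1 z := by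
  induction k, hk using Nat.le_induction with
  | base => exact AgreeAt.refl _ _
  | succ k hmk ih => exact (step_agreeAt inv adm _ (hz.trans_le hmk)).trans ih

noncomputable abbrev stage (z : C.Obj) : Prediagram X :=
  (tower inv adm hX (inv.rank z + 1)).1

noncomputable def replacement : Prediagram X where
  obj z := (stage inv adm hX z).obj z
  unit z := (stage inv adm hX z).unit z
  proj z e o := cast (tower_agreeAt inv adm hX (Nat.lt_succ_self _)
    (Nat.succ_le_succ (inv.rank_lt o).le)).obj_eq ((stage inv adm hX z).proj z e o)

theorem replacement_agreeAt {z w : C.Obj} (hw : inv.rank w ≤ inv.rank z) :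
    (replacement inv adm hX).AgreeAt (stage inv adm hX z) w := by
  refine AgreeAt.trans ?_
    (tower_agreeAt inv adm hX (Nat.lt_succ_self _) (Nat.succ_le_succ hw)).symm
  exact ⟨rfl, fun _ => .rfl, fun hab o => (cast_heq _ _).trans (by rw [eq_of_heq hab])⟩

theorem isReplacementAt_replacement (z : C.Obj) :
    (replacement inv adm hX).IsReplacementAt inv T z :=
  ((tower inv adm hX (inv.rank z + 1)).2 z (Nat.lt_succ_self _)).of_agreeAt inv
    fun _ hw => replacement_agreeAt inv adm hX hw

noncomputable def replacementUnitIsEquiv (z : C.Obj) :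
    IsEquivT T ((replacement inv adm hX).unit z) :=
  IsEquivT.ofCastEq _ (step_unit_of_eq inv adm (tower inv adm hX (inv.rank z)).2 rfl)
    (Cocyl.inclIsEquiv _ (hX z) (fib_fibrantMatching inv adm _))

end Tower

end Prediagram

end ReedyReplacement

/-- Every diagram over an admissible inverse category admits a Reedy fibrant
replacement: a Reedy fibrant diagram `Y` with a levelwise equivalence `η : X → Y`. -/
theorem reedy_fibrant_replacement (T : TLTT.{u}) (C : SCat.{u})
    (inv : IsInverse C) (adm : Admissible T C)
    (X : SFunctor C) (hX : ∀ z : C.Obj, T.Fib (X.obj z)) :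
    Nonempty ((Y : SFunctor C) ×' (η : SNat X Y) ×'
      (∀ z : C.Obj, T.Fib (Y.obj z)) ∧ ReedyFibrant T Y ∧
      ∀ z : C.Obj, Nonempty (IsEquivT T (η.app z))) :=
  let P := ReedyReplacement.Prediagram.replacement inv adm hX
  have hP := ReedyReplacement.Prediagram.isReplacementAt_replacement inv adm hX
  ⟨⟨P.toSFunctor inv hP, P.unitNat inv hP, fun z => (hP z).fib,
    P.reedyFibrant_toSFunctor inv hP,
    fun z => ⟨ReedyReplacement.Prediagram.replacementUnitIsEquiv inv adm hX z⟩⟩⟩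
end

section
/- Let X be a complete Reedy fibrant semi-Segal type. Then for every object x : X₀ there exists a unit morphism u : X̄₁(x, x), i.e. a morphism such that u ∘ g = g for all g : X̄₁(y, x) and h ∘ u = h for all h : X̄₁(x, z). -/
universe u

/-- The derived structure of a Reedy fibrant semi-Segal type: a fibrant type of
objects, a fibrant family of morphisms `X̄₁`, and the weakly associative composition
obtained by inverting the Segal equivalences. -/
structure SemiSegalData (T : TLTT.{u}) where
  Obj : Type u
  Hom : Obj → Obj → Type u
  fib_obj : T.Fib Obj
  fib_hom : ∀ x y : Obj, T.Fib (Hom x y)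
  comp : ∀ {x y z : Obj}, Hom y z → Hom x y → Hom x z
  assoc : ∀ {x y z w : Obj} (h : Hom z w) (g : Hom y z) (f : Hom x y),
      T.Id (comp h (comp g f)) (comp (comp h g) f)

/-- A morphism is an equivalence if post- and pre-composition with it are type
equivalences. -/
def SSIsEquiv (T : TLTT.{u}) (S : SemiSegalData T) {x y : S.Obj} (f : S.Hom x y) :
    Prop :=
  (∀ z : S.Obj, Nonempty (IsEquivT T (fun g : S.Hom z x => S.comp f g))) ∧
  (∀ z : S.Obj, Nonempty (IsEquivT T (fun h : S.Hom y z => S.comp h f)))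

/-- Completeness: the map sending an equivalence to its source is a type equivalence
from the total type of equivalences to the type of objects. -/
def SSComplete (T : TLTT.{u}) (S : SemiSegalData T) : Prop :=
  Nonempty (IsEquivT T
    (fun e : Σ x : S.Obj, Σ y : S.Obj, { f : S.Hom x y // SSIsEquiv T S f } => e.1))

namespace SSUnits

variable (T : TLTT.{u})

/-- Symmetry of fibrant equality. -/
def idsymm {A : Type u} (hA : T.Fib A) {a b : A} (p : T.Id a b) : T.Id b a :=
  T.J a (fun c _ => T.Id c a) (fun c _ => T.fib_id hA c a) (T.idrefl a) b p

/-- Transitivity of fibrant equality. -/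
def idtrans {A : Type u} (hA : T.Fib A) {a b c : A} (p : T.Id a b) (q : T.Id b c) :
    T.Id a c :=
  T.J b (fun d _ => T.Id a d) (fun d _ => T.fib_id hA a d) p c q

/-- Congruence (`ap`) for fibrant equality. -/
def idap {A B : Type u} (hB : T.Fib B) (F : A → B) {a b : A} (p : T.Id a b) :
    T.Id (F a) (F b) :=
  T.J a (fun c _ => T.Id (F a) (F c)) (fun c _ => T.fib_id hB (F a) (F c))
    (T.idrefl (F a)) b p

variable (S : SemiSegalData T)

/-- Packaged equivalence data for a morphism `f : Hom x y`, expressed using only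
Σ, Π and Id, so that it is fibrant. -/
def EData {x y : S.Obj} (f : S.Hom x y) : Type u :=
  Σ G : (∀ z : S.Obj, S.Hom z y → S.Hom z x),
  Σ _ : (∀ (z : S.Obj) (k : S.Hom z y), T.Id (S.comp f (G z k)) k),
  Σ H : (∀ z : S.Obj, S.Hom z y → S.Hom z x),
  Σ _ : (∀ (z : S.Obj) (g : S.Hom z x), T.Id (H z (S.comp f g)) g),
  Σ G' : (∀ z : S.Obj, S.Hom x z → S.Hom y z),
  (∀ (z : S.Obj) (k : S.Hom x z), T.Id (S.comp (G' z k) f) k)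

theorem fib_EData {x y : S.Obj} (f : S.Hom x y) : T.Fib (EData T S f) := by
  have fo := S.fib_obj
  have fh := S.fib_hom
  have fmap : ∀ (a b c d : S.Obj), T.Fib (∀ z : S.Obj, S.Hom z a → S.Hom z b) :=
    fun a b _ _ => T.fib_pi fo fun z => T.fib_pi (fh z a) fun _ => fh z b
  have fmap' : T.Fib (∀ z : S.Obj, S.Hom x z → S.Hom y z) :=
    T.fib_pi fo fun z => T.fib_pi (fh x z) fun _ => fh y z
  refine T.fib_sigma (fmap y x y x) fun G => ?_
  refine T.fib_sigma (T.fib_pi fo fun z => T.fib_pi (fh z y) fun k =>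
    T.fib_id (fh z y) _ _) fun _ => ?_
  refine T.fib_sigma (fmap y x y x) fun H => ?_
  refine T.fib_sigma (T.fib_pi fo fun z => T.fib_pi (fh z x) fun g =>
    T.fib_id (fh z x) _ _) fun _ => ?_
  refine T.fib_sigma fmap' fun G' => ?_
  exact T.fib_pi fo fun z => T.fib_pi (fh x z) fun k => T.fib_id (fh x z) _ _

/-- The packaged type "there is an equivalence with source `b`". -/
def Pack (b : S.Obj) : Type u :=
  Σ y : S.Obj, Σ f : S.Hom b y, EData T S f

theorem fib_Pack (b : S.Obj) : T.Fib (Pack T S b) :=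
  T.fib_sigma S.fib_obj fun y =>
    T.fib_sigma (S.fib_hom b y) fun f => fib_EData T S f

/-- From an equivalence (in the Prop sense) extract packaged equivalence data. -/
noncomputable def edataOf {x y : S.Obj} (f : S.Hom x y) (hf : SSIsEquiv T S f) :
    EData T S f :=
  let post := fun z => Classical.choice (hf.1 z)
  let pre := fun z => Classical.choice (hf.2 z)
  ⟨fun z => (post z).1.1, fun z => (post z).1.2,
    fun z => (post z).2.1, fun z => (post z).2.2,
    fun z => (pre z).1.1, fun z => (pre z).1.2⟩

/-- Any object which is the source of an equivalence has a unit morphism. -/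
noncomputable def unitOfPack (x : S.Obj) (P : Pack T S x) :
    (u : S.Hom x x) ×'
      (∀ (y : S.Obj) (g : S.Hom y x), T.Id (S.comp u g) g) ×'
      (∀ (z : S.Obj) (h : S.Hom x z), T.Id (S.comp h u) h) := by
  obtain ⟨y, f, G, Gp, H, Hp, G', G'p⟩ := P
  have fh := S.fib_hom
  refine ⟨G x f, ?_, ?_⟩
  · intro w a
    have ε : T.Id (S.comp f (G x f)) f := Gp x f
    have q : T.Id (S.comp f (S.comp (G x f) a)) (S.comp f a) :=
      idtrans T (fh w y) (S.assoc f (G x f) a)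
        (idap T (fh w y) (fun t => S.comp t a) ε)
    have apH : T.Id (H w (S.comp f (S.comp (G x f) a))) (H w (S.comp f a)) :=
      idap T (fh w x) (H w) q
    exact idtrans T (fh w x)
      (idtrans T (fh w x) (idsymm T (fh w x) (Hp w (S.comp (G x f) a))) apH)
      (Hp w a)
  · intro z h
    have ε : T.Id (S.comp f (G x f)) f := Gp x f
    have η : T.Id (S.comp (G' z h) f) h := G'p z h
    have s1 : T.Id (S.comp h (G x f)) (S.comp (S.comp (G' z h) f) (G x f)) :=
      idap T (fh x z) (fun t => S.comp t (G x f)) (idsymm T (fh x z) η)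
    have s2 : T.Id (S.comp (S.comp (G' z h) f) (G x f))
        (S.comp (G' z h) (S.comp f (G x f))) :=
      idsymm T (fh x z) (S.assoc (G' z h) f (G x f))
    have s3 : T.Id (S.comp (G' z h) (S.comp f (G x f))) (S.comp (G' z h) f) :=
      idap T (fh x z) (fun t => S.comp (G' z h) t) ε
    exact idtrans T (fh x z)
      (idtrans T (fh x z) (idtrans T (fh x z) s1 s2) s3) η

end SSUnits

/-- In a complete Reedy fibrant semi-Segal type, every object has a unit morphism. -/
theorem complete_semi_segal_has_units (T : TLTT.{u}) (S : SemiSegalData T)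
    (hc : SSComplete T S) (x : S.Obj) :
    Nonempty ((u : S.Hom x x) ×'
      (∀ (y : S.Obj) (g : S.Hom y x), T.Id (S.comp u g) g) ×'
      (∀ (z : S.Obj) (h : S.Hom x z), T.Id (S.comp h u) h)) := by
  classical
  obtain ⟨eq⟩ := hc
  obtain ⟨⟨g, hg⟩, _⟩ := eq
  set e := g x with he
  have p : T.Id e.1 x := hg x
  -- package the equivalence sitting over e.1
  have P0 : SSUnits.Pack T S e.1 :=
    ⟨e.2.1, e.2.2.1, SSUnits.edataOf T S e.2.2.1 e.2.2.2⟩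
  -- transport it along p : Id e.1 x using path induction
  have P : SSUnits.Pack T S x :=
    T.J e.1 (fun b _ => SSUnits.Pack T S b) (fun b _ => SSUnits.fib_Pack T S b) P0 x p
  exact ⟨SSUnits.unitOfPack T S x P⟩
end
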